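/- arXiv:1710.03165 — 7 statements merged into one kernel-verified Lean document; each statement's English description precedes it below -/
import Mathlib

section
/- Let 𝓢 ⊆ 2^[n] be a Sperner family and let h : 𝓢 → 2^[n] be a function such that h(S) ⊆ S for every S ∈ 𝓢. Then 𝓕(𝓢,h) is s-extremal with Sh(𝓕(𝓢,h)) = 𝓗(𝓢) if and only if |𝓕(𝓢,h)| = |𝓗(𝓢)|. -/
open Finset

/-- `𝓕` shatters `S` if every subset of `S` arises as `F ∩ S` for some `F ∈ 𝓕`. -/
def Shatters {n : ℕ} (𝓕 : Finset (Finset (Fin n))) (S : Finset (Fin n)) : Prop :=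
  𝓕.image (· ∩ S) = S.powerset

/-- The family of all subsets of `[n]` shattered by `𝓕`. -/
def ShFam {n : ℕ} (𝓕 : Finset (Finset (Fin n))) : Finset (Finset (Fin n)) :=
  Finset.univ.filter fun S => 𝓕.image (· ∩ S) = S.powerset

/-- A set system is shattering-extremal if it shatters exactly `|𝓕|` sets. -/
def SExtremal {n : ℕ} (𝓕 : Finset (Finset (Fin n))) : Prop :=
  (ShFam 𝓕).card = 𝓕.card

/-- A Sperner family: no member contains another member. -/
def IsSperner {n : ℕ} (𝓢 : Finset (Finset (Fin n))) : Prop :=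
  ∀ S ∈ 𝓢, ∀ S' ∈ 𝓢, S ⊆ S' → S = S'

/-- `Q S H = {T ⊆ [n] : T ∩ S = H}`. -/
def Q {n : ℕ} (S H : Finset (Fin n)) : Finset (Finset (Fin n)) :=
  Finset.univ.filter fun T => T ∩ S = H

/-- `𝓗(𝓢) = {T ⊆ [n] : no S ∈ 𝓢 satisfies S ⊆ T}`. -/
def HFam {n : ℕ} (𝓢 : Finset (Finset (Fin n))) : Finset (Finset (Fin n)) :=
  Finset.univ.filter fun T => ∀ S ∈ 𝓢, ¬ S ⊆ T

/-- `𝓕(𝓢,h) = 2^[n] \ ⋃_{S ∈ 𝓢} Q_{S,h(S)}`. -/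
def FFam {n : ℕ} (𝓢 : Finset (Finset (Fin n))) (h : Finset (Fin n) → Finset (Fin n)) :
    Finset (Finset (Fin n)) :=
  Finset.univ \ 𝓢.biUnion fun S => Q S (h S)


lemma shfam_eq_shatterer {n : ℕ} (𝓕 : Finset (Finset (Fin n))) :
    ShFam 𝓕 = 𝓕.shatterer := by
  ext S
  simp only [ShFam, mem_filter, mem_univ, true_and, Finset.mem_shatterer, Finset.Shatters]
  constructor
  · intro hS t ht
    have ht' : t ∈ 𝓕.image (· ∩ S) := hS ▸ Finset.mem_powerset.2 ht
    obtain ⟨u, hu, hut⟩ := Finset.mem_image.1 ht'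
    exact ⟨u, hu, by rw [inter_comm]; exact hut⟩
  · intro hS
    apply Finset.Subset.antisymm
    · intro t ht
      obtain ⟨u, _, rfl⟩ := Finset.mem_image.1 ht
      exact Finset.mem_powerset.2 inter_subset_right
    · intro t ht
      obtain ⟨u, hu, hut⟩ := hS (Finset.mem_powerset.1 ht)
      exact Finset.mem_image.2 ⟨u, hu, by rw [inter_comm]; exact hut⟩

lemma shfam_subset_hfam {n : ℕ} (𝓢 : Finset (Finset (Fin n)))
    (h : Finset (Fin n) → Finset (Fin n)) (hsub : ∀ S ∈ 𝓢, h S ⊆ S) :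
    ShFam (FFam 𝓢 h) ⊆ HFam 𝓢 := by
  intro T hT
  simp only [ShFam, mem_filter, mem_univ, true_and] at hT
  simp only [HFam, mem_filter, mem_univ, true_and]
  intro S hS hST
  have hH' : (T \ S) ∪ h S ⊆ T := union_subset (sdiff_subset) ((hsub S hS).trans hST)
  have : (T \ S) ∪ h S ∈ (FFam 𝓢 h).image (· ∩ T) := hT ▸ Finset.mem_powerset.2 hH'
  obtain ⟨F, hF, hFT⟩ := Finset.mem_image.1 this
  simp only [FFam, mem_sdiff, mem_univ, true_and, Finset.mem_biUnion, not_exists] at hF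
  refine hF S ⟨hS, ?_⟩
  simp only [Q, mem_filter, mem_univ, true_and]
  have h1 : F ∩ S = (F ∩ T) ∩ S := by
    rw [inter_assoc, inter_eq_right.2 hST]
  rw [h1, hFT, union_inter_distrib_right, sdiff_inter_self, empty_union,
    inter_eq_left.2 (hsub S hS)]

/-- Proposition: `𝓕(𝓢,h)` is s-extremal with `Sh(𝓕(𝓢,h)) = 𝓗(𝓢)` iff
`|𝓕(𝓢,h)| = |𝓗(𝓢)|`. -/
theorem stmt_0 {n : ℕ} (𝓢 : Finset (Finset (Fin n))) (h : Finset (Fin n) → Finset (Fin n))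
    (hSperner : IsSperner 𝓢) (hsub : ∀ S ∈ 𝓢, h S ⊆ S) :
    (SExtremal (FFam 𝓢 h) ∧ ShFam (FFam 𝓢 h) = HFam 𝓢) ↔
      (FFam 𝓢 h).card = (HFam 𝓢).card := by
  constructor
  · rintro ⟨he, heq⟩
    rw [← he, heq]
  · intro hcard
    have hle : (FFam 𝓢 h).card ≤ (ShFam (FFam 𝓢 h)).card := by
      rw [shfam_eq_shatterer]; exact Finset.card_le_card_shatterer _
    have hsub' := shfam_subset_hfam 𝓢 h hsub
    have h2 : (ShFam (FFam 𝓢 h)).card ≤ (HFam 𝓢).card := Finset.card_le_card hsub'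
    have heq : ShFam (FFam 𝓢 h) = HFam 𝓢 :=
      Finset.eq_of_subset_of_card_le hsub' (by omega)
    exact ⟨by show (ShFam _).card = _; rw [heq]; omega, heq⟩
end

section
/- Let 𝓕 ⊆ 2^[n] be an s-extremal set system. If (𝓢, h) and (𝓢', h') are two pairs, each consisting of a Sperner family together with a function mapping each member S to a subset of S, such that 𝓕 = 𝓕(𝓢,h) with Sh(𝓕) = 𝓗(𝓢) and 𝓕 = 𝓕(𝓢',h') with Sh(𝓕) = 𝓗(𝓢'), then 𝓢 = 𝓢' and h(S) = h'(S) for every S ∈ 𝓢. -/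
open Finset

variable {n : ℕ}

lemma mem_ShFam {𝓕 : Finset (Finset (Fin n))} {A : Finset (Fin n)} :
    A ∈ ShFam 𝓕 ↔ ∀ B ⊆ A, ∃ F ∈ 𝓕, F ∩ A = B := by
  simp only [ShFam, mem_filter, mem_univ, true_and]
  constructor
  · intro hA B hB
    have : B ∈ 𝓕.image (· ∩ A) := hA ▸ mem_powerset.mpr hB
    simpa using this
  · intro hA
    apply Finset.Subset.antisymm
    · intro B hB
      simp only [mem_image] at hB
      obtain ⟨F, _, rfl⟩ := hB
      exact mem_powerset.mpr inter_subset_right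
    · intro B hB
      obtain ⟨F, hF, hFB⟩ := hA B (mem_powerset.mp hB)
      exact mem_image.mpr ⟨F, hF, hFB⟩

lemma exists_sup {𝓕 : Finset (Finset (Fin n))} {A : Finset (Fin n)} (hA : A ∈ ShFam 𝓕) :
    ∃ F ∈ 𝓕, A ⊆ F := by
  obtain ⟨F, hF, hFA⟩ := mem_ShFam.mp hA A (Finset.Subset.refl A)
  refine ⟨F, hF, ?_⟩
  intro a ha
  rw [← hFA] at ha
  exact (mem_inter.mp ha).1

def projx (x : Fin n) (𝓕 : Finset (Finset (Fin n))) : Finset (Finset (Fin n)) :=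
  𝓕.image (fun F => F.erase x)

def Dx (x : Fin n) (𝓕 : Finset (Finset (Fin n))) : Finset (Finset (Fin n)) :=
  𝓕.filter (fun F => x ∉ F ∧ insert x F ∈ 𝓕)

lemma card_projx (x : Fin n) (𝓕 : Finset (Finset (Fin n))) :
    𝓕.card = (projx x 𝓕).card + (Dx x 𝓕).card := by
  classical
  set A := 𝓕.filter (fun F => x ∉ F) with hA
  set B := (𝓕.filter (fun F => x ∈ F)).image (fun F => F.erase x) with hB
  have hcardB : B.card = (𝓕.filter (fun F => x ∈ F)).card := by
    apply Finset.card_image_of_injOn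
    intro F hF G hG hFG
    simp only [Finset.coe_filter, Set.mem_setOf_eq] at hF hG
    simp only at hFG
    have : insert x (F.erase x) = insert x (G.erase x) := by rw [hFG]
    rwa [Finset.insert_erase hF.2, Finset.insert_erase hG.2] at this
  have hunion : projx x 𝓕 = A ∪ B := by
    rw [hA, hB, projx]
    ext G
    simp only [mem_image, mem_union, mem_filter]
    constructor
    · rintro ⟨F, hF, rfl⟩
      by_cases hx : x ∈ F
      · exact Or.inr ⟨F, ⟨hF, hx⟩, rfl⟩
      · exact Or.inl ⟨by rwa [Finset.erase_eq_of_notMem hx], Finset.notMem_erase x F⟩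
    · rintro (⟨hG, hx⟩ | ⟨F, ⟨hF, _⟩, rfl⟩)
      · exact ⟨G, hG, Finset.erase_eq_of_notMem hx⟩
      · exact ⟨F, hF, rfl⟩
  have hinter : A ∩ B = Dx x 𝓕 := by
    rw [hA, hB, Dx]
    ext F
    simp only [mem_inter, mem_filter, mem_image]
    constructor
    · rintro ⟨⟨hF, hx⟩, G, ⟨hG, hxG⟩, rfl⟩
      exact ⟨hF, hx, by rwa [Finset.insert_erase hxG]⟩
    · rintro ⟨hF, hx, hins⟩
      exact ⟨⟨hF, hx⟩, insert x F, ⟨hins, Finset.mem_insert_self x F⟩,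
        by rw [Finset.erase_insert hx]⟩
  have h1 : (projx x 𝓕).card + (Dx x 𝓕).card = A.card + B.card := by
    rw [hunion, ← hinter, Finset.card_union_add_card_inter]
  rw [h1, hcardB]
  have h2 := Finset.card_filter_add_card_filter_not (s := 𝓕) (p := fun F => x ∈ F)
  rw [hA]
  omega

lemma erase_inter_of_notMem {x : Fin n} {F A : Finset (Fin n)} (hx : x ∉ A) :
    F.erase x ∩ A = F ∩ A := by
  ext a
  simp only [mem_inter, mem_erase]
  constructor
  · rintro ⟨⟨_, ha⟩, hA⟩; exact ⟨ha, hA⟩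
  · rintro ⟨ha, hA⟩; exact ⟨⟨fun hax => hx (hax ▸ hA), ha⟩, hA⟩

lemma shfam_projx {x : Fin n} {𝓕 : Finset (Finset (Fin n))} {A : Finset (Fin n)}
    (hA : A ∈ ShFam (projx x 𝓕)) : A ∈ ShFam 𝓕 ∧ x ∉ A := by
  obtain ⟨G, hG, hAG⟩ := exists_sup hA
  obtain ⟨F, _, rfl⟩ := mem_image.mp hG
  have hx : x ∉ A := fun hxA => Finset.notMem_erase x F (hAG hxA)
  refine ⟨mem_ShFam.mpr fun B hB => ?_, hx⟩
  obtain ⟨G', hG', hGB⟩ := mem_ShFam.mp hA B hB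
  obtain ⟨F', hF', rfl⟩ := mem_image.mp hG'
  exact ⟨F', hF', by rwa [erase_inter_of_notMem hx] at hGB⟩

lemma shfam_projx' {x : Fin n} {𝓕 : Finset (Finset (Fin n))} {A : Finset (Fin n)}
    (hA : A ∈ ShFam 𝓕) (hx : x ∉ A) : A ∈ ShFam (projx x 𝓕) := by
  refine mem_ShFam.mpr fun B hB => ?_
  obtain ⟨F, hF, hFB⟩ := mem_ShFam.mp hA B hB
  exact ⟨F.erase x, mem_image.mpr ⟨F, hF, rfl⟩, by rwa [erase_inter_of_notMem hx]⟩

lemma shfam_Dx {x : Fin n} {𝓕 : Finset (Finset (Fin n))} {A : Finset (Fin n)}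
    (hA : A ∈ ShFam (Dx x 𝓕)) : insert x A ∈ ShFam 𝓕 ∧ x ∉ A := by
  obtain ⟨G, hG, hAG⟩ := exists_sup hA
  rw [Dx, mem_filter] at hG
  have hx : x ∉ A := fun hxA => hG.2.1 (hAG hxA)
  refine ⟨mem_ShFam.mpr fun B hB => ?_, hx⟩
  obtain ⟨F, hF, hFB⟩ := mem_ShFam.mp hA (B.erase x)
    (fun a ha => by
      have := hB (Finset.mem_of_mem_erase ha)
      rcases Finset.mem_insert.mp this with h1 | h1
      · exact absurd h1 (Finset.ne_of_mem_erase ha)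
      · exact h1)
  rw [Dx, mem_filter] at hF
  by_cases hxB : x ∈ B
  · refine ⟨insert x F, hF.2.2, ?_⟩
    have : insert x F ∩ insert x A = insert x (F ∩ A) := by
      ext a
      simp only [mem_inter, mem_insert]
      tauto
    rw [this, hFB, Finset.insert_erase hxB]
  · refine ⟨F, hF.1, ?_⟩
    have : F ∩ insert x A = F ∩ A := by
      ext a
      simp only [mem_inter, mem_insert]
      constructor
      · rintro ⟨haF, rfl | haA⟩
        · exact absurd haF hF.2.1
        · exact ⟨haF, haA⟩
      · rintro ⟨haF, haA⟩; exact ⟨haF, Or.inr haA⟩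
    rw [this, hFB, Finset.erase_eq_of_notMem hxB]

lemma card_shfam_ge (x : Fin n) (𝓕 : Finset (Finset (Fin n))) :
    (ShFam (projx x 𝓕)).card + (ShFam (Dx x 𝓕)).card ≤ (ShFam 𝓕).card := by
  classical
  have hsub : ShFam (projx x 𝓕) ∪ (ShFam (Dx x 𝓕)).image (insert x) ⊆ ShFam 𝓕 := by
    intro A hA
    rcases mem_union.mp hA with h1 | h1
    · exact (shfam_projx h1).1
    · obtain ⟨B, hB, rfl⟩ := mem_image.mp h1
      exact (shfam_Dx hB).1
  have hdisj : Disjoint (ShFam (projx x 𝓕)) ((ShFam (Dx x 𝓕)).image (insert x)) := by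
    rw [Finset.disjoint_left]
    intro A hA hA'
    obtain ⟨B, hB, rfl⟩ := mem_image.mp hA'
    exact (shfam_projx hA).2 (Finset.mem_insert_self x B)
  have hinj : ((ShFam (Dx x 𝓕)).image (insert x)).card = (ShFam (Dx x 𝓕)).card := by
    apply Finset.card_image_of_injOn
    intro A hA B hB hAB
    simp only [Finset.mem_coe] at hA hB
    have hxA := (shfam_Dx hA).2
    have hxB := (shfam_Dx hB).2
    have : (insert x A).erase x = (insert x B).erase x := by rw [hAB]
    rwa [Finset.erase_insert hxA, Finset.erase_insert hxB] at this
  calc (ShFam (projx x 𝓕)).card + (ShFam (Dx x 𝓕)).card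
      = (ShFam (projx x 𝓕) ∪ (ShFam (Dx x 𝓕)).image (insert x)).card := by
        rw [Finset.card_union_of_disjoint hdisj, hinj]
    _ ≤ (ShFam 𝓕).card := Finset.card_le_card hsub

lemma pajor_aux (E : Finset (Fin n)) :
    ∀ 𝓕 : Finset (Finset (Fin n)), (∀ F ∈ 𝓕, F ⊆ E) → 𝓕.card ≤ (ShFam 𝓕).card := by
  classical
  induction E using Finset.induction_on with
  | empty =>
    intro 𝓕 hsupp
    have : 𝓕 ⊆ {∅} := fun F hF => Finset.mem_singleton.mpr
      (Finset.subset_empty.mp (hsupp F hF))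
    rcases Finset.subset_singleton_iff.mp this with rfl | rfl
    · simp
    · have : (∅ : Finset (Fin n)) ∈ ShFam ({∅} : Finset (Finset (Fin n))) := by
        refine mem_ShFam.mpr fun B hB => ⟨∅, Finset.mem_singleton_self _, ?_⟩
        rw [Finset.subset_empty.mp hB]
        simp
      calc ({∅} : Finset (Finset (Fin n))).card = 1 := Finset.card_singleton _
        _ ≤ _ := Finset.card_pos.mpr ⟨∅, this⟩
  | @insert x E hxE ih =>
    intro 𝓕 hsupp
    have h1 : ∀ F ∈ projx x 𝓕, F ⊆ E := by
      intro G hG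
      obtain ⟨F, hF, rfl⟩ := mem_image.mp hG
      intro a ha
      rcases Finset.mem_insert.mp (hsupp F hF (Finset.mem_of_mem_erase ha)) with h | h
      · exact absurd h (Finset.ne_of_mem_erase ha)
      · exact h
    have h2 : ∀ F ∈ Dx x 𝓕, F ⊆ E := by
      intro F hF
      rw [Dx, mem_filter] at hF
      intro a ha
      rcases Finset.mem_insert.mp (hsupp F hF.1 ha) with h | h
      · exact absurd (h ▸ ha) hF.2.1
      · exact h
    calc 𝓕.card = (projx x 𝓕).card + (Dx x 𝓕).card := card_projx x 𝓕
      _ ≤ (ShFam (projx x 𝓕)).card + (ShFam (Dx x 𝓕)).card :=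
          Nat.add_le_add (ih _ h1) (ih _ h2)
      _ ≤ (ShFam 𝓕).card := card_shfam_ge x 𝓕

lemma pajor (𝓕 : Finset (Finset (Fin n))) : 𝓕.card ≤ (ShFam 𝓕).card :=
  pajor_aux Finset.univ 𝓕 (fun F _ => Finset.subset_univ F)

lemma sextremal_projx {𝓕 : Finset (Finset (Fin n))} (hext : SExtremal 𝓕) (x : Fin n) :
    SExtremal (projx x 𝓕) := by
  have h1 := pajor (projx x 𝓕)
  have h2 := pajor (Dx x 𝓕)
  have h3 := card_shfam_ge x 𝓕
  have h4 := card_projx x 𝓕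
  unfold SExtremal at hext ⊢
  omega

lemma sextremal_sdiff {𝓕 : Finset (Finset (Fin n))} (hext : SExtremal 𝓕)
    (R : Finset (Fin n)) : SExtremal (𝓕.image (· \ R)) := by
  classical
  induction R using Finset.induction_on with
  | empty => simpa using hext
  | @insert x R hxR ih =>
    have : 𝓕.image (· \ insert x R) = projx x (𝓕.image (· \ R)) := by
      rw [projx, Finset.image_image]
      apply Finset.image_congr
      intro F _
      ext a
      simp only [Function.comp_apply, mem_sdiff, mem_erase, mem_insert]
      tauto
    rw [this]
    exact sextremal_projx ih x

lemma sextremal_trace {𝓕 : Finset (Finset (Fin n))} (hext : SExtremal 𝓕)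
    (S : Finset (Fin n)) : SExtremal (𝓕.image (· ∩ S)) := by
  have : 𝓕.image (· ∩ S) = 𝓕.image (· \ (Finset.univ \ S)) := by
    apply Finset.image_congr
    intro F _
    ext a
    simp
  rw [this]
  exact sextremal_sdiff hext _

lemma mem_shfam_trace {𝓕 : Finset (Finset (Fin n))} {S A : Finset (Fin n)} :
    A ∈ ShFam (𝓕.image (· ∩ S)) ↔ A ∈ ShFam 𝓕 ∧ A ⊆ S := by
  constructor
  · intro hA
    obtain ⟨G, hG, hAG⟩ := exists_sup hA
    obtain ⟨F, _, rfl⟩ := mem_image.mp hG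
    have hAS : A ⊆ S := hAG.trans inter_subset_right
    refine ⟨mem_ShFam.mpr fun B hB => ?_, hAS⟩
    obtain ⟨G', hG', hGB⟩ := mem_ShFam.mp hA B hB
    obtain ⟨F', hF', rfl⟩ := mem_image.mp hG'
    refine ⟨F', hF', ?_⟩
    rw [← hGB]
    ext a
    simp only [mem_inter]
    exact ⟨fun ⟨h1, h2⟩ => ⟨⟨h1, hAS h2⟩, h2⟩, fun ⟨⟨h1, _⟩, h2⟩ => ⟨h1, h2⟩⟩
  · rintro ⟨hA, hAS⟩
    refine mem_ShFam.mpr fun B hB => ?_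
    obtain ⟨F, hF, hFB⟩ := mem_ShFam.mp hA B hB
    refine ⟨F ∩ S, mem_image.mpr ⟨F, hF, rfl⟩, ?_⟩
    rw [← hFB]
    ext a
    simp only [mem_inter]
    exact ⟨fun ⟨⟨h1, _⟩, h2⟩ => ⟨h1, h2⟩, fun ⟨h1, h2⟩ => ⟨⟨h1, hAS h2⟩, h2⟩⟩





lemma mem_HFam {𝓢 : Finset (Finset (Fin n))} {T : Finset (Fin n)} :
    T ∈ HFam 𝓢 ↔ ∀ S ∈ 𝓢, ¬ S ⊆ T := by
  simp [HFam]

lemma sperner_sub {𝓢 𝓢' : Finset (Finset (Fin n))} (hS : IsSperner 𝓢)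
    (hH : HFam 𝓢 = HFam 𝓢') : 𝓢 ⊆ 𝓢' := by
  intro S hSmem
  have h1 : S ∉ HFam 𝓢' := by
    rw [← hH, mem_HFam]
    push_neg
    exact ⟨S, hSmem, Finset.Subset.refl S⟩
  rw [mem_HFam] at h1
  push_neg at h1
  obtain ⟨S', hS'mem, hS'S⟩ := h1
  have h2 : S' ∉ HFam 𝓢 := by
    rw [hH, mem_HFam]
    push_neg
    exact ⟨S', hS'mem, Finset.Subset.refl S'⟩
  rw [mem_HFam] at h2
  push_neg at h2
  obtain ⟨S'', hS''mem, hS''S'⟩ := h2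
  have : S'' = S := hS S'' hS''mem S hSmem (hS''S'.trans hS'S)
  have : S' = S := Finset.Subset.antisymm hS'S (this ▸ hS''S')
  rwa [← this]

lemma notMem_FFam_trace {𝓢 : Finset (Finset (Fin n))} {h : Finset (Fin n) → Finset (Fin n)}
    {S : Finset (Fin n)} (hSmem : S ∈ 𝓢) :
    h S ∉ (FFam 𝓢 h).image (· ∩ S) := by
  intro hmem
  obtain ⟨F, hF, hFS⟩ := mem_image.mp hmem
  rw [FFam, mem_sdiff] at hF
  exact hF.2 (Finset.mem_biUnion.mpr ⟨S, hSmem, by simp [Q, hFS]⟩)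


/-- Uniqueness: the pair `(𝓢,h)` representing an s-extremal family is unique. -/
theorem stmt_3 {n : ℕ} (𝓕 : Finset (Finset (Fin n))) (hext : SExtremal 𝓕)
    (𝓢 𝓢' : Finset (Finset (Fin n))) (h h' : Finset (Fin n) → Finset (Fin n))
    (hSperner : IsSperner 𝓢) (hsub : ∀ S ∈ 𝓢, h S ⊆ S)
    (hSperner' : IsSperner 𝓢') (hsub' : ∀ S ∈ 𝓢', h' S ⊆ S)
    (hF : 𝓕 = FFam 𝓢 h) (hSh : ShFam 𝓕 = HFam 𝓢)
    (hF' : 𝓕 = FFam 𝓢' h') (hSh' : ShFam 𝓕 = HFam 𝓢') :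
    𝓢 = 𝓢' ∧ ∀ S ∈ 𝓢, h S = h' S := by
  classical
  have hHeq : HFam 𝓢 = HFam 𝓢' := by rw [← hSh, hSh']
  have h𝓢 : 𝓢 = 𝓢' :=
    Finset.Subset.antisymm (sperner_sub hSperner hHeq) (sperner_sub hSperner' hHeq.symm)
  refine ⟨h𝓢, fun S hSmem => ?_⟩
  by_contra hne
  have hS'mem : S ∈ 𝓢' := h𝓢 ▸ hSmem
  -- S is nonempty
  have hSne : S ≠ ∅ := by
    rintro rfl
    have e1 : h ∅ = ∅ := Finset.subset_empty.mp (hsub ∅ hSmem)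
    have e2 : h' ∅ = ∅ := Finset.subset_empty.mp (hsub' ∅ hS'mem)
    exact hne (e1.trans e2.symm)
  set 𝓣 := 𝓕.image (· ∩ S) with h𝓣
  have hTe : SExtremal 𝓣 := sextremal_trace hext S
  have hShT : ShFam 𝓣 = S.powerset.erase S := by
    ext A
    rw [h𝓣, mem_shfam_trace, hSh, mem_HFam, Finset.mem_erase, Finset.mem_powerset]
    constructor
    · rintro ⟨hA, hAS⟩
      refine ⟨fun hAeq => hA S hSmem (hAeq ▸ Finset.Subset.refl S), hAS⟩
    · rintro ⟨hAne, hAS⟩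
      refine ⟨fun S₂ hS₂ hS₂A => ?_, hAS⟩
      have : S₂ = S := hSperner S₂ hS₂ S hSmem (hS₂A.trans hAS)
      exact hAne (Finset.Subset.antisymm hAS (this ▸ hS₂A))
  have hcShT : (ShFam 𝓣).card = 2 ^ S.card - 1 := by
    rw [hShT, Finset.card_erase_of_mem (Finset.mem_powerset_self S), Finset.card_powerset]
  have htc : 𝓣.card = 2 ^ S.card - 1 := by
    have := hTe
    unfold SExtremal at this
    omega
  have hn1 : h S ∉ 𝓣 := by rw [h𝓣, hF]; exact notMem_FFam_trace hSmem
  have hn2 : h' S ∉ 𝓣 := by rw [h𝓣, hF']; exact notMem_FFam_trace hS'mem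
  have hsubT : 𝓣 ⊆ S.powerset \ {h S, h' S} := by
    intro A hA
    rw [Finset.mem_sdiff, Finset.mem_powerset]
    obtain ⟨F, _, rfl⟩ := mem_image.mp hA
    refine ⟨inter_subset_right, ?_⟩
    simp only [Finset.mem_insert, Finset.mem_singleton]
    rintro (heq | heq)
    · exact hn1 (heq ▸ hA)
    · exact hn2 (heq ▸ hA)
  have hpair : ({h S, h' S} : Finset (Finset (Fin n))) ⊆ S.powerset := by
    intro A hA
    simp only [Finset.mem_insert, Finset.mem_singleton] at hA
    rcases hA with rfl | rfl
    · exact Finset.mem_powerset.mpr (hsub S hSmem)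
    · exact Finset.mem_powerset.mpr (hsub' S hS'mem)
  have hcard2 : ({h S, h' S} : Finset (Finset (Fin n))).card = 2 :=
    Finset.card_pair hne
  have hcsd : (S.powerset \ {h S, h' S}).card = 2 ^ S.card - 2 := by
    rw [Finset.card_sdiff_of_subset hpair, hcard2, Finset.card_powerset]
  have hle : 𝓣.card ≤ 2 ^ S.card - 2 := hcsd ▸ Finset.card_le_card hsubT
  have h2le : 2 ≤ 2 ^ S.card := by
    have : 1 ≤ S.card := Finset.card_pos.mpr (Finset.nonempty_iff_ne_empty.mpr hSne)
    calc 2 = 2 ^ 1 := rfl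
      _ ≤ 2 ^ S.card := Nat.pow_le_pow_right (by norm_num) this
  omega
end

section
/- Let 𝓢 ⊆ 2^[n] be a Sperner family and 𝓕 ⊆ 2^[n] a set system that shatters no element of 𝓢. Then |𝓕| ≤ |𝓗(𝓢)|. -/
open Finset

/-- `𝓕` shatters `S` if every subset of `S` arises as `F ∩ S` for some `F ∈ 𝓕`. -/
def ShattersFam {n : ℕ} (𝓕 : Finset (Finset (Fin n))) (S : Finset (Fin n)) : Prop :=
  𝓕.image (· ∩ S) = S.powerset

lemma shattersFam_iff_shatters {n : ℕ} (𝓕 : Finset (Finset (Fin n))) (S : Finset (Fin n)) :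
    ShattersFam 𝓕 S ↔ 𝓕.Shatters S := by
  rw [ShattersFam, Finset.shatters_iff]
  simp [inter_comm]

/-- Generalized Sauer inequality: if `𝓕` shatters no element of the Sperner family `𝓢`,
then `|𝓕| ≤ |𝓗(𝓢)|`. -/
theorem stmt_4 {n : ℕ} (𝓢 𝓕 : Finset (Finset (Fin n))) (hSperner : IsSperner 𝓢)
    (hns : ∀ S ∈ 𝓢, ¬ ShattersFam 𝓕 S) :
    𝓕.card ≤ (HFam 𝓢).card := by
  refine (Finset.card_le_card_shatterer 𝓕).trans (Finset.card_le_card ?_)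
  intro T hT
  rw [Finset.mem_shatterer] at hT
  rw [HFam, Finset.mem_filter]
  refine ⟨Finset.mem_univ _, fun S hS hST => ?_⟩
  exact hns S hS ((shattersFam_iff_shatters 𝓕 S).2 (hT.mono_right hST))
end

section
/- Let 𝓢 ⊆ 2^[n] be a Sperner family and h : 𝓢 → 2^[n] a function such that h(S) ⊆ S for every S ∈ 𝓢. Then for every two distinct members S₁, S₂ ∈ 𝓢 we have Q_{S₁,h(S₁)} ⊄ Q_{S₂,h(S₂)}. -/
open Finset

/-- For distinct members of a Sperner family, no cube is contained in another. -/
theorem stmt_11 {n : ℕ} (𝓢 : Finset (Finset (Fin n))) (h : Finset (Fin n) → Finset (Fin n))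
    (hSperner : IsSperner 𝓢) (hsub : ∀ S ∈ 𝓢, h S ⊆ S)
    (S₁ S₂ : Finset (Fin n)) (hS₁ : S₁ ∈ 𝓢) (hS₂ : S₂ ∈ 𝓢) (hne : S₁ ≠ S₂) :
    ¬ (Q S₁ (h S₁) ⊆ Q S₂ (h S₂)) := by
  intro hQ
  have hnsub : ¬ S₂ ⊆ S₁ := fun hc => hne ((hSperner S₂ hS₂ S₁ hS₁ hc).symm)
  obtain ⟨x, hxS₂, hxS₁⟩ := not_subset.mp hnsub
  have h0 : h S₁ ∈ Q S₁ (h S₁) := by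
    simp [Q, inter_eq_left.mpr (hsub S₁ hS₁)]
  have h1 : insert x (h S₁) ∈ Q S₁ (h S₁) := by
    simp only [Q, mem_filter, mem_univ, true_and]
    rw [insert_inter_of_notMem hxS₁, inter_eq_left.mpr (hsub S₁ hS₁)]
  have e0 : h S₁ ∩ S₂ = h S₂ := by simpa [Q] using hQ h0
  have e1 : insert x (h S₁) ∩ S₂ = h S₂ := by simpa [Q] using hQ h1
  rw [insert_inter_of_mem hxS₂, e0] at e1
  have : x ∈ h S₂ := e1 ▸ mem_insert_self x _
  rw [← e0] at this
  exact hxS₁ (hsub S₁ hS₁ (mem_of_mem_inter_left this))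
end

section
/- Let 𝓢 = {S₁,…,S_N} ⊆ 2^[n] be a Sperner family and h : 𝓢 → 2^[n] a function with h(S) ⊆ S for every S ∈ 𝓢, and write H_i = h(S_i). If there exists an index i ∈ [N] such that at most one index j ≠ i satisfies S_i ∩ H_j = S_j ∩ H_i, then there exists S₀ ∈ 𝓢 such that Q_{S₀,h(S₀)} ⊄ ⋃_{S ∈ 𝓢\{S₀}} Q_{S,h(S)}. -/
open Finset

/-- If some vertex of the auxiliary graph has degree at most one, the cube
formulation of the conjecture holds. -/
theorem stmt_12 {n : ℕ} (𝓢 : Finset (Finset (Fin n))) (h : Finset (Fin n) → Finset (Fin n))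
    (hSperner : IsSperner 𝓢) (hsub : ∀ S ∈ 𝓢, h S ⊆ S)
    (hdeg : ∃ S ∈ 𝓢, ((𝓢.erase S).filter fun S' => S ∩ h S' = S' ∩ h S).card ≤ 1) :
    ∃ S₀ ∈ 𝓢, ¬ (Q S₀ (h S₀) ⊆ (𝓢.erase S₀).biUnion fun S => Q S (h S)) := by
  obtain ⟨S, hS, hcard⟩ := hdeg
  refine ⟨S, hS, fun hcov => ?_⟩
  have hmemQ : ∀ A H T : Finset (Fin n), T ∈ Q A H ↔ T ∩ A = H := by
    intro A H T; simp [Q]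
  have key : ∀ T : Finset (Fin n), T ∩ S = h S → ∀ S'' ∈ 𝓢.erase S,
      T ∩ S'' = h S'' → S ∩ h S'' = S'' ∩ h S := by
    intro T hT S'' _ hT2
    calc S ∩ h S'' = S ∩ (T ∩ S'') := by rw [hT2]
      _ = T ∩ S ∩ S'' := by rw [inter_comm S, inter_assoc, inter_comm S'', ← inter_assoc]
      _ = S'' ∩ h S := by rw [hT, inter_comm]
  have mem_of_cov : ∀ T : Finset (Fin n), T ∩ S = h S →
      ∃ S'' ∈ (𝓢.erase S).filter (fun S' => S ∩ h S' = S' ∩ h S), T ∩ S'' = h S'' := by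
    intro T hT
    have : T ∈ (𝓢.erase S).biUnion fun S'' => Q S'' (h S'') :=
      hcov ((hmemQ S (h S) T).mpr hT)
    obtain ⟨S'', hS'', hTQ⟩ := Finset.mem_biUnion.mp this
    have hT2 := (hmemQ _ _ _).mp hTQ
    exact ⟨S'', Finset.mem_filter.mpr ⟨hS'', key T hT S'' hS'' hT2⟩, hT2⟩
  have hhS : h S ∩ S = h S := inter_eq_left.mpr (hsub S hS)
  obtain ⟨S', hS'F, hT1⟩ := mem_of_cov (h S) hhS
  obtain ⟨hS'e, _⟩ := Finset.mem_filter.mp hS'F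
  have hS'S : S' ∈ 𝓢 := Finset.mem_of_mem_erase hS'e
  have hne : S' ≠ S := Finset.ne_of_mem_erase hS'e
  have hnsub : ¬ S' ⊆ S := fun hs => hne (hSperner S' hS'S S hS hs)
  obtain ⟨x, hxS', hxS⟩ := Finset.not_subset.mp hnsub
  have hT2inS : insert x (h S) ∩ S = h S := by
    rw [Finset.insert_inter_of_notMem hxS, hhS]
  obtain ⟨S'', hS''F, hT2⟩ := mem_of_cov (insert x (h S)) hT2inS
  have hSS : S'' = S' := by
    by_contra hne2
    have := Finset.one_lt_card.mpr ⟨S'', hS''F, S', hS'F, hne2⟩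
    omega
  subst hSS
  have hxhS : x ∉ h S := fun hx => hxS (hsub S hS hx)
  rw [Finset.insert_inter_of_mem hxS'] at hT2
  have hx : x ∈ h S'' := hT2 ▸ Finset.mem_insert_self x _
  rw [← hT1] at hx
  exact hxhS (Finset.mem_inter.mp hx).1
end

section
/- Let 𝓢 ⊆ 2^[n] be a nonempty Sperner family and h : 𝓢 → 2^[n] a function with h(S) ⊆ S for every S ∈ 𝓢. If S ∩ h(S') = S' ∩ h(S) for every pair of members S, S' ∈ 𝓢, then there exists S₀ ∈ 𝓢 such that Q_{S₀,h(S₀)} ⊄ ⋃_{S ∈ 𝓢\{S₀}} Q_{S,h(S)}. -/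
open Finset

/-- If the auxiliary graph is complete, the cube formulation of the conjecture holds. -/
theorem stmt_13 {n : ℕ} (𝓢 : Finset (Finset (Fin n))) (h : Finset (Fin n) → Finset (Fin n))
    (hSperner : IsSperner 𝓢) (hne : 𝓢.Nonempty) (hsub : ∀ S ∈ 𝓢, h S ⊆ S)
    (hcomp : ∀ S ∈ 𝓢, ∀ S' ∈ 𝓢, S ∩ h S' = S' ∩ h S) :
    ∃ S₀ ∈ 𝓢, ¬ (Q S₀ (h S₀) ⊆ (𝓢.erase S₀).biUnion fun S => Q S (h S)) := by
  obtain ⟨S₀, hS₀⟩ := hne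
  refine ⟨S₀, hS₀, fun hcov => ?_⟩
  set U : Finset (Fin n) := 𝓢.biUnion h with hU
  set T : Finset (Fin n) := h S₀ ∪ ((Finset.univ \ S₀) \ U) with hT
  have hTQ : T ∈ Q S₀ (h S₀) := by
    simp only [Q, mem_filter, mem_univ, true_and]
    ext x
    simp only [hT, mem_inter, mem_union, mem_sdiff, mem_univ, true_and]
    constructor
    · rintro ⟨hx1 | ⟨hx2, _⟩, hx3⟩
      · exact hx1
      · exact absurd hx3 hx2
    · intro hx
      exact ⟨Or.inl hx, hsub S₀ hS₀ hx⟩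
  have := hcov hTQ
  simp only [mem_biUnion, mem_erase, Q, mem_filter, mem_univ, true_and] at this
  obtain ⟨S, ⟨hSne, hS⟩, hTS⟩ := this
  -- hTS : T ∩ S = h S
  have hhSU : h S ⊆ U := fun x hx => mem_biUnion.mpr ⟨S, hS, hx⟩
  -- Step 1: h S ⊆ S₀
  have step1 : h S ⊆ S₀ := by
    intro x hx
    have hxT : x ∈ T ∩ S := hTS ▸ hx
    rcases mem_union.mp (mem_inter.mp hxT).1 with hx1 | hx2
    · exact hsub S₀ hS₀ hx1
    · exact absurd (hhSU hx) (mem_sdiff.mp hx2).2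
  -- Step 2: S ⊆ S₀
  have step2 : S ⊆ S₀ := by
    intro x hxS
    by_contra hxS₀
    by_cases hxU : x ∈ U
    · obtain ⟨S', hS', hx'⟩ := mem_biUnion.mp hxU
      have : x ∈ S ∩ h S' := mem_inter.mpr ⟨hxS, hx'⟩
      rw [hcomp S hS S' hS'] at this
      exact hxS₀ (step1 (mem_inter.mp this).2)
    · have hxT : x ∈ T := mem_union.mpr (Or.inr (mem_sdiff.mpr
        ⟨mem_sdiff.mpr ⟨mem_univ x, hxS₀⟩, hxU⟩))
      have : x ∈ h S := hTS ▸ mem_inter.mpr ⟨hxT, hxS⟩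
      exact hxS₀ (step1 this)
  exact hSne (hSperner S hS S₀ hS₀ step2)
end

section
/- Let 𝔽 be a field, 𝓢 ⊆ 2^[n] a Sperner family and h : 𝓢 → 2^[n] a function with h(S) ⊆ S for every S ∈ 𝓢. Then the set of common zeros in 𝔽^n of the polynomial system 𝔾(𝓢,h) = {f_{S,h(S)} : S ∈ 𝓢} ∪ {x_i² − x_i : i ∈ [n]} is exactly {v_F : F ∈ 𝓕(𝓢,h)}, the set of characteristic vectors of the members of 𝓕(𝓢,h). -/
open Finset

/-- `f_{S,H} = (∏_{i∈H} xᵢ)·(∏_{i∈S\\H} (xᵢ − 1))`. -/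
noncomputable def fPoly (𝔽 : Type*) [Field 𝔽] {n : ℕ} (S H : Finset (Fin n)) : MvPolynomial (Fin n) 𝔽 :=
  (∏ i ∈ H, MvPolynomial.X i) * ∏ i ∈ S \ H, (MvPolynomial.X i - 1)

/-- The characteristic vector of `F ⊆ [n]`. -/
def charVec (𝔽 : Type*) [Field 𝔽] {n : ℕ} (F : Finset (Fin n)) : Fin n → 𝔽 :=
  fun i => if i ∈ F then 1 else 0

lemma inter_eq_iff_subset_and_disjoint_sdiff {α : Type*} [DecidableEq α] {F S H : Finset α}
    (hHS : H ⊆ S) : F ∩ S = H ↔ H ⊆ F ∧ Disjoint (S \ H) F := by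
  constructor
  · rintro rfl
    exact ⟨inter_subset_left, disjoint_left.2 fun i hi hiF =>
      (mem_sdiff.1 hi).2 (mem_inter.2 ⟨hiF, (mem_sdiff.1 hi).1⟩)⟩
  · rintro ⟨hHF, hdisj⟩
    ext i
    simp only [mem_inter]
    exact ⟨fun ⟨hiF, hiS⟩ => by_contra fun hiH =>
        disjoint_left.1 hdisj (mem_sdiff.2 ⟨hiS, hiH⟩) hiF,
      fun hiH => ⟨hHF hiH, hHS hiH⟩⟩

lemma eval_fPoly_charVec_eq_zero_iff (𝔽 : Type*) [Field 𝔽] {n : ℕ} {S H : Finset (Fin n)}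
    (hHS : H ⊆ S) (F : Finset (Fin n)) :
    MvPolynomial.eval (charVec 𝔽 F) (fPoly 𝔽 S H) = 0 ↔ F ∩ S ≠ H := by
  have hH : (∏ i ∈ H, charVec 𝔽 F i) ≠ 0 ↔ H ⊆ F := by
    simp [prod_ne_zero_iff, charVec, subset_iff]
  have hSH : (∏ i ∈ S \ H, (charVec 𝔽 F i - 1)) ≠ 0 ↔ Disjoint (S \ H) F := by
    simp [prod_ne_zero_iff, charVec, disjoint_left, sub_eq_zero]
  simp only [fPoly, map_mul, MvPolynomial.eval_prod, MvPolynomial.eval_X, map_sub, map_one]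
  rw [← not_iff_not, not_not, ← ne_eq, mul_ne_zero_iff, hH, hSH,
    inter_eq_iff_subset_and_disjoint_sdiff hHS]

lemma eval_X_sq_sub_X_eq_zero_iff {R σ : Type*} [CommRing R] [NoZeroDivisors R]
    (x : σ → R) (i : σ) :
    MvPolynomial.eval x (MvPolynomial.X i ^ 2 - MvPolynomial.X i) = 0 ↔ x i = 0 ∨ x i = 1 := by
  simp only [map_sub, map_pow, MvPolynomial.eval_X, sub_eq_zero]
  exact ⟨eq_zero_or_one_of_sq_eq_self, by rintro (h | h) <;> simp [h]⟩

lemma mem_range_charVec_iff (𝔽 : Type*) [Field 𝔽] {n : ℕ} (x : Fin n → 𝔽) :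
    x ∈ Set.range (charVec 𝔽) ↔ ∀ i, x i = 0 ∨ x i = 1 := by
  classical
  constructor
  · rintro ⟨F, rfl⟩ i
    by_cases hi : i ∈ F <;> simp [charVec, hi]
  · intro hx
    refine ⟨univ.filter fun i => x i = 1, funext fun i => ?_⟩
    rcases hx i with h0 | h1 <;> simp [charVec, *]

lemma mem_FFam_iff {n : ℕ} {𝓢 : Finset (Finset (Fin n))}
    {h : Finset (Fin n) → Finset (Fin n)} {F : Finset (Fin n)} : F ∈ FFam 𝓢 h ↔ ∀ S ∈ 𝓢, F ∩ S ≠ h S := by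
  simp [FFam, Q]

theorem stmt_18_general (𝔽 : Type*) [Field 𝔽] {n : ℕ} (𝓢 : Finset (Finset (Fin n)))
    (h : Finset (Fin n) → Finset (Fin n))
    (hsub : ∀ S ∈ 𝓢, h S ⊆ S) :
    {x : Fin n → 𝔽 | (∀ S ∈ 𝓢, MvPolynomial.eval x (fPoly 𝔽 S (h S)) = 0) ∧
        ∀ i : Fin n, MvPolynomial.eval x (MvPolynomial.X i ^ 2 - MvPolynomial.X i) = 0} =
      charVec 𝔽 '' (FFam 𝓢 h : Set (Finset (Fin n))) := by
  ext x
  simp only [eval_X_sq_sub_X_eq_zero_iff, ← mem_range_charVec_iff, Set.mem_ofPred_eq]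
  constructor
  · rintro ⟨hzero, F, rfl⟩
    exact ⟨F, mem_FFam_iff.2 fun S hS =>
      (eval_fPoly_charVec_eq_zero_iff 𝔽 (hsub S hS) F).1 (hzero S hS), rfl⟩
  · rintro ⟨F, hF, rfl⟩
    exact ⟨fun S hS => (eval_fPoly_charVec_eq_zero_iff 𝔽 (hsub S hS) F).2
      (mem_FFam_iff.1 hF S hS), F, rfl⟩

/-- The set of common zeros of `𝔾(𝓢,h)` is exactly the set of characteristic
vectors of the members of `𝓕(𝓢,h)`. -/
theorem stmt_18 (𝔽 : Type*) [Field 𝔽] {n : ℕ} (𝓢 : Finset (Finset (Fin n)))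
    (h : Finset (Fin n) → Finset (Fin n))
    (hSperner : IsSperner 𝓢) (hsub : ∀ S ∈ 𝓢, h S ⊆ S) :
    {x : Fin n → 𝔽 | (∀ S ∈ 𝓢, MvPolynomial.eval x (fPoly 𝔽 S (h S)) = 0) ∧
        ∀ i : Fin n, MvPolynomial.eval x (MvPolynomial.X i ^ 2 - MvPolynomial.X i) = 0} =
      charVec 𝔽 '' (FFam 𝓢 h : Set (Finset (Fin n))) :=
  stmt_18_general 𝔽 𝓢 h hsub
end
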